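/- arXiv:2206.01003 — 2 statements merged into one kernel-verified Lean document; each statement's English description precedes it below -/
import Mathlib

section
/- Let G₁ be the disjoint union of two copies of the 4-cycle and G₂ the 8-cycle. Then every vertex u of G₂ has exactly 2 vertices at graph distance exactly 2 from it, whereas every vertex u of G₁ has exactly 1 vertex at graph distance exactly 2 from it. (This witnesses that the logical classifier ∃^{≥2} y E₂(x,y), expressible with the 2-hop shortest path predicate E₂, is true at every node of G₂ and false at every node of G₁.) -/
open SimpleGraph

/-- `G₁` : disjoint union of two copies of the 4-cycle. -/
noncomputable def G₁ : SimpleGraph (Fin 4 ⊕ Fin 4) := cycleGraph 4 ⊕g cycleGraph 4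

/-- `G₂` : the 8-cycle. -/
noncomputable def G₂ : SimpleGraph (Fin 8) := cycleGraph 8

instance sumAdjDec {α β : Type*} {G : SimpleGraph α} {H : SimpleGraph β}
    [DecidableRel G.Adj] [DecidableRel H.Adj] : DecidableRel (G ⊕g H).Adj
  | Sum.inl u, Sum.inl v => inferInstanceAs (Decidable (G.Adj u v))
  | Sum.inl _, Sum.inr _ => Decidable.isFalse (by unfold SimpleGraph.sum; simp)
  | Sum.inr _, Sum.inl _ => Decidable.isFalse (by unfold SimpleGraph.sum; simp)
  | Sum.inr u, Sum.inr v => inferInstanceAs (Decidable (H.Adj u v))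

lemma dist_eq_two_iff {V : Type*} (G : SimpleGraph V) (u v : V) :
    G.dist u v = 2 ↔ u ≠ v ∧ ¬G.Adj u v ∧ ∃ w, G.Adj u w ∧ G.Adj w v := by
  constructor
  · intro h
    have hr : G.Reachable u v := by
      by_contra hr
      have := SimpleGraph.dist_eq_zero_iff_eq_or_not_reachable.mpr (Or.inr hr)
      omega
    have hne : u ≠ v := by
      rintro rfl
      simp [SimpleGraph.dist_self] at h
    have hnadj : ¬G.Adj u v := by
      intro ha
      have := SimpleGraph.dist_eq_one_iff_adj.mpr ha
      omega
    obtain ⟨p, hp⟩ := hr.exists_walk_length_eq_dist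
    rw [h] at hp
    refine ⟨hne, hnadj, ?_⟩
    match p, hp with
    | SimpleGraph.Walk.cons h1 (SimpleGraph.Walk.cons h2 SimpleGraph.Walk.nil), _ =>
      exact ⟨_, h1, h2⟩
  · rintro ⟨hne, hnadj, w, h1, h2⟩
    have hle : G.dist u v ≤ 2 := by
      have := SimpleGraph.dist_le (SimpleGraph.Walk.cons h1 (SimpleGraph.Walk.cons h2 SimpleGraph.Walk.nil))
      simpa using this
    have hr : G.Reachable u v := (SimpleGraph.Walk.cons h1 (SimpleGraph.Walk.cons h2 SimpleGraph.Walk.nil)).reachable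
    have h0 : G.dist u v ≠ 0 := fun h => hne (hr.dist_eq_zero_iff.mp h)
    have h1' : G.dist u v ≠ 1 := fun h => hnadj (SimpleGraph.dist_eq_one_iff_adj.mp h)
    omega

theorem stmt2 :
    (∀ u : Fin 8, {v : Fin 8 | G₂.dist u v = 2}.ncard = 2) ∧
    (∀ u : Fin 4 ⊕ Fin 4, {v : Fin 4 ⊕ Fin 4 | G₁.dist u v = 2}.ncard = 1) := by
  constructor
  · intro u
    have hset : {v : Fin 8 | G₂.dist u v = 2} =
        ↑(Finset.univ.filter fun v : Fin 8 =>
          u ≠ v ∧ ¬(cycleGraph 8).Adj u v ∧ ∃ w, (cycleGraph 8).Adj u w ∧ (cycleGraph 8).Adj w v) := by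
      ext v
      simp only [Set.mem_setOf_eq, Finset.coe_filter, Finset.mem_univ, true_and]
      exact dist_eq_two_iff (cycleGraph 8) u v
    rw [hset, Set.ncard_coe_finset]
    clear hset; revert u; decide
  · intro u
    have hset : {v : Fin 4 ⊕ Fin 4 | G₁.dist u v = 2} =
        ↑(Finset.univ.filter fun v : Fin 4 ⊕ Fin 4 =>
          u ≠ v ∧ ¬(cycleGraph 4 ⊕g cycleGraph 4).Adj u v ∧
            ∃ w, (cycleGraph 4 ⊕g cycleGraph 4).Adj u w ∧ (cycleGraph 4 ⊕g cycleGraph 4).Adj w v) := by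
      ext v
      simp only [Set.mem_setOf_eq, Finset.coe_filter, Finset.mem_univ, true_and]
      exact dist_eq_two_iff (cycleGraph 4 ⊕g cycleGraph 4) u v
    rw [hset, Set.ncard_coe_finset]
    clear hset; revert u; decide
end

section
/- Every pair of vertices of I₁ is at graph distance at most 3, and some pair of vertices of I₁ is at graph distance exactly 3 (so I₁ has diameter 3), whereas I₂ contains a pair of vertices at graph distance exactly 4. Hence the shortest path kernel distinguishes I₁ and I₂. -/
open SimpleGraph

/-!
Distances in a finite graph are decidable once reformulated as bounded reachability:
`G.dist u v ≤ n` holds as soon as `v` can be reached from `u` in at most `n` steps, and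
`G.dist u v = n + 1` as soon as it can be reached in `n + 1` steps but not in `n`. The extremal
pairs are `0, 6` in `I₁` and the opposite corners `0, 7` of the ladder `I₂`; all the finitely
many reachability statements involved are checked by `decide`.
-/

/-- `I₁` : the simple graph on `Fin 8` with the edges
`{0,1},{0,2},{1,3},{2,4},{2,5},{3,4},{3,5},{4,6},{5,7},{6,7}`. -/
def I₁ : SimpleGraph (Fin 8) :=
  SimpleGraph.fromEdgeSet
    {s(0,1), s(0,2), s(1,3), s(2,4), s(2,5), s(3,4), s(3,5), s(4,6), s(5,7), s(6,7)}

/-- `I₂` : the 2×4 ladder graph. -/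
def I₂ : SimpleGraph (Fin 8) :=
  SimpleGraph.fromEdgeSet
    {s(0,1), s(0,2), s(1,3), s(2,3), s(2,4), s(3,5), s(4,5), s(4,6), s(5,7), s(6,7)}

namespace SimpleGraph

variable {V : Type*} (G : SimpleGraph V)

def ReachableWithin : ℕ → V → V → Prop
  | 0, u, v => u = v
  | n + 1, u, v => u = v ∨ ∃ w, G.Adj u w ∧ ReachableWithin n w v

instance decidableReachableWithin [Fintype V] [DecidableEq V] [DecidableRel G.Adj] :
    ∀ n, DecidableRel (G.ReachableWithin n)
  | 0 => fun u v => inferInstanceAs (Decidable (u = v))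
  | n + 1 => fun u v =>
    have := decidableReachableWithin n
    inferInstanceAs (Decidable (u = v ∨ ∃ w, G.Adj u w ∧ G.ReachableWithin n w v))

variable {G}

theorem reachableWithin_iff_exists_walk {n : ℕ} {u v : V} :
    G.ReachableWithin n u v ↔ ∃ p : G.Walk u v, p.length ≤ n := by
  induction n generalizing u with
  | zero =>
    refine ⟨fun h => h ▸ ⟨.nil, le_rfl⟩, fun ⟨p, hp⟩ => ?_⟩
    exact Walk.eq_of_length_eq_zero (Nat.le_zero.mp hp)
  | succ n ih =>
    simp only [ReachableWithin, ih]
    constructor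
    · rintro (rfl | ⟨w, huw, p, hp⟩)
      · exact ⟨.nil, Nat.zero_le _⟩
      · exact ⟨.cons huw p, by simpa using hp⟩
    · rintro ⟨_ | ⟨huw, p⟩, hp⟩
      · exact .inl rfl
      · exact .inr ⟨_, huw, p, by simpa using hp⟩

theorem dist_le_of_reachableWithin {n : ℕ} {u v : V} (h : G.ReachableWithin n u v) :
    G.dist u v ≤ n := by
  obtain ⟨p, hp⟩ := reachableWithin_iff_exists_walk.mp h
  exact (G.dist_le p).trans hp

theorem dist_eq_succ_of_reachableWithin_of_not {n : ℕ} {u v : V}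
    (h : G.ReachableWithin (n + 1) u v) (h' : ¬ G.ReachableWithin n u v) :
    G.dist u v = n + 1 := by
  obtain ⟨p, -⟩ := reachableWithin_iff_exists_walk.mp h
  obtain ⟨q, hq⟩ := p.reachable.exists_walk_length_eq_dist
  have hlt : n < G.dist u v := by
    by_contra! hle
    exact h' (reachableWithin_iff_exists_walk.mpr ⟨q, hq ▸ hle⟩)
  exact le_antisymm (dist_le_of_reachableWithin h) hlt

end SimpleGraph

instance : DecidableRel I₁.Adj := by unfold I₁; infer_instance

instance : DecidableRel I₂.Adj := by unfold I₂; infer_instance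

theorem stmt5 :
    (∀ u v : Fin 8, I₁.dist u v ≤ 3) ∧
    (∃ u v : Fin 8, I₁.dist u v = 3) ∧
    (∃ u v : Fin 8, I₂.dist u v = 4) :=
  ⟨fun u v => dist_le_of_reachableWithin (by revert u v; decide),
    ⟨0, 6, dist_eq_succ_of_reachableWithin_of_not (by decide) (by decide)⟩,
    ⟨0, 7, dist_eq_succ_of_reachableWithin_of_not (by decide) (by decide)⟩⟩
end
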